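/- For every z = (α, β, M) ∈ Z and every z̄ = (ᾱ, β̄, M̄) ∈ Λ, the function t ↦ f₀((M + tM̄) − (M + tM̄)ᵀ)·((α + tᾱ) − (β + tβ̄)) is an affine function of t ∈ ℝ (a polynomial of degree at most one in t). In particular, f₀(M̄ − M̄ᵀ)·(ᾱ − β̄) = 0 for every (ᾱ, β̄, M̄) ∈ Λ. -/

import Mathlib

open Matrix

noncomputable section

/-- Vectors in ℝ³. -/
abbrev V3 := Fin 3 → ℝ
/-- 3×3 real matrices. -/
abbrev Mat3 := Matrix (Fin 3) (Fin 3) ℝ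
/-- The state space Z = ℝ³ × ℝ³ × ℝ^{3×3}. -/
abbrev Z := V3 × V3 × Mat3

/-- Euclidean dot product on ℝ³. -/
def dot3 (u v : V3) : ℝ := ∑ i, u i * v i
/-- Euclidean norm on ℝ³. -/
def norm3 (v : V3) : ℝ := Real.sqrt (dot3 v v)
/-- Outer (tensor) product u ⊗ v. -/
def outer (u v : V3) : Mat3 := Matrix.vecMulVec u v

/-- The constraint set K_{r,s}. -/
def Krs (r s p : ℝ) : Set Z :=
  {z | z.2.2 = outer z.1 z.2.1 + p • (1 : Mat3) ∧ norm3 z.1 = r ∧ norm3 z.2.1 = s}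

/-- The wave cone Λ. -/
def waveCone : Set Z :=
  {z | ∃ (ξ : V3) (c : ℝ), ξ ≠ 0 ∧ z.2.2 *ᵥ ξ + c • z.1 = 0 ∧
    z.2.2ᵀ *ᵥ ξ + c • z.2.1 = 0 ∧ dot3 z.1 ξ = 0 ∧ dot3 z.2.1 ξ = 0}

/-- M₀(z) = α⊗β − M + p·Id. -/
def M0 (p : ℝ) (z : Z) : Mat3 := outer z.1 z.2.1 - z.2.2 + p • (1 : Mat3)

/-- G(z) = √((r² − |α|²)(s² − |β|²)). -/
def Gfun (r s : ℝ) (z : Z) : ℝ :=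
  Real.sqrt ((r ^ 2 - norm3 z.1 ^ 2) * (s ^ 2 - norm3 z.2.1 ^ 2))

/-- Iterated lamination sets K_{r,s}^{Λ,i}. -/
def lamSet (r s p : ℝ) : ℕ → Set Z
  | 0 => Krs r s p
  | (i + 1) => {z | ∃ zb ∈ waveCone, ∃ t₁ t₂ : ℝ, t₁ ≤ 0 ∧ 0 ≤ t₂ ∧
      z + t₁ • zb ∈ lamSet r s p i ∧ z + t₂ • zb ∈ lamSet r s p i}

/-- Nuclear norm: trace of the PSD square root of AᵀA. -/
def nuclearNorm (A : Mat3) : ℝ :=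
  ((((Matrix.posSemidef_conjTranspose_mul_self A).1.eigenvectorUnitary : Mat3) *
    Matrix.diagonal (Real.sqrt ∘ (Matrix.posSemidef_conjTranspose_mul_self A).1.eigenvalues) *
    (star ((Matrix.posSemidef_conjTranspose_mul_self A).1.eigenvectorUnitary : Mat3))) : Mat3).trace

/-- f₀(A) = (A₂₃, A₃₁, A₁₂) (0-indexed: (A 1 2, A 2 0, A 0 1)). -/
def f0 (A : Mat3) : V3 := ![A 1 2, A 2 0, A 0 1]

/-- Frobenius norm of a matrix. -/
def frobNorm (A : Mat3) : ℝ := Real.sqrt (∑ i, ∑ j, A i j ^ 2)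

/-- Λ-convexity of a set. -/
def LambdaConvex (S : Set Z) : Prop :=
  ∀ z₁ ∈ S, ∀ z₂ ∈ S, z₁ - z₂ ∈ waveCone →
    ∀ t : ℝ, t ∈ Set.Icc (0 : ℝ) 1 → z₁ + t • (z₂ - z₁) ∈ S

/-- The Λ-convex hull of K_{r,s}: the intersection of all Λ-convex sets containing it. -/
def lambdaHull (r s p : ℝ) : Set Z := ⋂₀ {S : Set Z | LambdaConvex S ∧ Krs r s p ⊆ S}

/-- Auxiliary: the key quadratic-coefficient vanishing for wave-cone directions. -/
theorem stmt16_key_zero (zb : Z) (hzb : zb ∈ waveCone) :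
    dot3 (f0 (zb.2.2 - zb.2.2ᵀ)) (zb.1 - zb.2.1) = 0 := by
  obtain ⟨ξ, c, hξ, h1, h2, h3, h4⟩ := hzb
  set α := zb.1; set β := zb.2.1; set M := zb.2.2
  have E : ∀ i, (M *ᵥ ξ) i + c * α i = 0 := fun i => congrFun h1 i
  have F : ∀ i, (Mᵀ *ᵥ ξ) i + c * β i = 0 := fun i => congrFun h2 i
  simp only [Matrix.mulVec, dotProduct, Fin.sum_univ_three, Matrix.transpose_apply] at E F
  have E0 := E 0; have E1 := E 1; have E2 := E 2
  have F0 := F 0; have F1 := F 1; have F2 := F 2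
  simp only [dot3, Fin.sum_univ_three] at h3 h4 ⊢
  simp only [f0, Matrix.sub_apply, Matrix.transpose_apply, Pi.sub_apply,
    Matrix.cons_val_zero, Matrix.cons_val_one, Matrix.head_cons,
    Matrix.cons_val_two, Matrix.tail_cons]
  set g : ℝ := (M 1 2 - M 2 1) * (α 0 - β 0) + (M 2 0 - M 0 2) * (α 1 - β 1)
      + (M 0 1 - M 1 0) * (α 2 - β 2) with hg
  have key0 : ξ 0 * g = 0 := by
    rw [hg]
    linear_combination (M 1 2 - M 2 1) * (h3 - h4) + (α 1 - β 1) * (E2 - F2)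
      - (α 2 - β 2) * (E1 - F1)
  have key1 : ξ 1 * g = 0 := by
    rw [hg]
    linear_combination (M 2 0 - M 0 2) * (h3 - h4) + (α 2 - β 2) * (E0 - F0)
      - (α 0 - β 0) * (E2 - F2)
  have key2 : ξ 2 * g = 0 := by
    rw [hg]
    linear_combination (M 0 1 - M 1 0) * (h3 - h4) + (α 0 - β 0) * (E1 - F1)
      - (α 1 - β 1) * (E0 - F0)
  by_contra hgne
  apply hξ
  funext k
  fin_cases k
  · exact (mul_eq_zero.1 key0).resolve_right hgne
  · exact (mul_eq_zero.1 key1).resolve_right hgne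
  · exact (mul_eq_zero.1 key2).resolve_right hgne

theorem stmt16 (z zb : Z) (hzb : zb ∈ waveCone) :
    (∃ u v : ℝ, ∀ t : ℝ,
      dot3 (f0 ((z.2.2 + t • zb.2.2) - (z.2.2 + t • zb.2.2)ᵀ))
        ((z.1 + t • zb.1) - (z.2.1 + t • zb.2.1)) = u * t + v) ∧
      dot3 (f0 (zb.2.2 - zb.2.2ᵀ)) (zb.1 - zb.2.1) = 0 := by
  have hg := stmt16_key_zero zb hzb
  refine ⟨⟨dot3 (f0 (z.2.2 - z.2.2ᵀ)) (zb.1 - zb.2.1)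
      + dot3 (f0 (zb.2.2 - zb.2.2ᵀ)) (z.1 - z.2.1),
    dot3 (f0 (z.2.2 - z.2.2ᵀ)) (z.1 - z.2.1), fun t => ?_⟩, hg⟩
  simp only [dot3, f0, Fin.sum_univ_three, Matrix.sub_apply, Matrix.add_apply,
    Matrix.transpose_apply, Matrix.smul_apply, Pi.sub_apply, Pi.add_apply, Pi.smul_apply,
    smul_eq_mul, Matrix.cons_val_zero, Matrix.cons_val_one, Matrix.head_cons,
    Matrix.cons_val_two, Matrix.tail_cons] at hg ⊢
  linear_combination t ^ 2 * hg
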